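/- arXiv:math/9905189 — 2 statements merged into one kernel-verified Lean document; each statement's English description precedes it below -/
import Mathlib

section
/- For each n ≥ 0, the nth level z-measure sums to 1 over partitions of n: ∑_{λ ⊢ n} (∏_{b∈λ} (c(b)+z)(c(b)+z')) / (zz')_n · (dim λ)² / n! = 1, where z, z' are complex parameters with z' = conj(z) and z not an integer. -/
/-- `p` is a partition of `n`: weakly decreasing, supported on `{0,…,n-1}`, summing to `n`. -/
def IsPartitionOf (n : ℕ) (p : ℕ → ℕ) : Prop :=
  Antitone p ∧ (∀ i, n ≤ i → p i = 0) ∧ ∑ i ∈ Finset.range n, p i = n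

/-- The cells (boxes) of the Young diagram of `p`, in 0-based coordinates. -/
def cells (n : ℕ) (p : ℕ → ℕ) : Finset (ℕ × ℕ) :=
  (Finset.range n ×ˢ Finset.range n).filter (fun c => c.2 < p c.1)

/-- The conjugate (transposed) partition. -/
def conjPart (n : ℕ) (p : ℕ → ℕ) (j : ℕ) : ℕ :=
  ((Finset.range n).filter (fun i => j < p i)).card

/-- The hook length of the box `c = (i, j)` of the diagram of `p`. -/
def hook (n : ℕ) (p : ℕ → ℕ) (c : ℕ × ℕ) : ℕ :=
  p c.1 + conjPart n p c.2 - c.1 - c.2 - 1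

/-- `T` is a standard Young tableau of shape `p ⊢ n`: a bijective filling of the cells
by `1,…,n`, strictly increasing along rows and columns (and `0` outside the diagram). -/
def IsSYT (n : ℕ) (p : ℕ → ℕ) (T : ℕ × ℕ → ℕ) : Prop :=
  (∀ c, c ∉ cells n p → T c = 0) ∧
  Set.BijOn T (cells n p : Set (ℕ × ℕ)) (Set.Icc 1 n) ∧
  (∀ i j, (i, j + 1) ∈ cells n p → T (i, j) < T (i, j + 1)) ∧
  (∀ i j, (i + 1, j) ∈ cells n p → T (i, j) < T (i + 1, j))

/-- `dim λ`: the number of standard Young tableaux of shape `p ⊢ n`. -/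
noncomputable def dimSYT (n : ℕ) (p : ℕ → ℕ) : ℕ :=
  Set.ncard {T : ℕ × ℕ → ℕ | IsSYT n p T}

/-!
Write `W(λ) = ∏_{□ ∈ λ} (c(□) + z)(c(□) + z')` and `S_n = ∑_{λ ⊢ n} W(λ) (dim λ)²`. The branching
rule `dim Λ = ∑_{λ ↗ Λ} dim λ` (a standard tableau of `Λ ⊢ n + 1` is one of `λ = Λ - ■` plus the
entry `n + 1` in the corner `■`) regroups `S_{n+1}` over the edges `λ ↗ λ + □` of Young's lattice:
`S_{n+1} = ∑_{λ ⊢ n} W(λ) dim λ · ∑_□ (c(□) + z)(c(□) + z') dim (λ + □)`.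
Kerov's identity evaluates the inner sum as `(n + 1)(zz' + n) dim λ`, whence `S_n = (zz')_n n!`;
this is nonzero because `zz' = |z|² > 0`.

Kerov's identity is proved by induction on `n`. Expanding `dim (λ + □)` by the branching rule and
exchanging "add `□`" with "remove `■ ≠ □`" reduces it to the identity for the partitions `λ - ■` and
to `∑_□ (c(□) + z)(c(□) + z') - ∑_■ (c(■) + z)(c(■) + z') = 2n + zz'` (sums over the addable boxes
`□` and the removable boxes `■` of `λ`), which telescopes along the rows of `λ`.
-/

open Finset Function

section YoungLattice

variable {n i j r b : ℕ} {p : ℕ → ℕ}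

def addBox (p : ℕ → ℕ) (i : ℕ) : ℕ → ℕ := update p i (p i + 1)

def removeBox (p : ℕ → ℕ) (i : ℕ) : ℕ → ℕ := update p i (p i - 1)

@[simp] lemma addBox_self : addBox p i i = p i + 1 := update_self ..

lemma addBox_of_ne (h : j ≠ i) : addBox p i j = p j := update_of_ne h ..

@[simp] lemma removeBox_self : removeBox p i i = p i - 1 := update_self ..

lemma removeBox_of_ne (h : j ≠ i) : removeBox p i j = p j := update_of_ne h ..

@[simp] lemma removeBox_addBox : removeBox (addBox p i) i = p := by
  simp [removeBox, addBox]

lemma addBox_removeBox (h : 0 < p i) : addBox (removeBox p i) i = p := by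
  simp [removeBox, addBox, Nat.sub_add_cancel h]

lemma removeBox_addBox_comm (h : i ≠ j) : removeBox (addBox p i) j = addBox (removeBox p j) i := by
  simp only [removeBox, addBox, update_of_ne h, update_of_ne h.symm, update_comm h]

lemma sum_addBox {s : Finset ℕ} (hi : i ∈ s) : ∑ j ∈ s, addBox p i j = ∑ j ∈ s, p j + 1 := by
  rw [addBox, sum_update_of_mem hi, sdiff_singleton_eq_erase, ← add_sum_erase s p hi]
  ring

def addableRows (n : ℕ) (p : ℕ → ℕ) : Finset ℕ :=
  (range (n + 1)).filter fun i => i = 0 ∨ p i < p (i - 1)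

def removableRows (n : ℕ) (p : ℕ → ℕ) : Finset ℕ :=
  (range n).filter fun i => p (i + 1) < p i

lemma mem_addableRows : b ∈ addableRows n p ↔ b < n + 1 ∧ (b = 0 ∨ p b < p (b - 1)) := by
  simp [addableRows]

lemma mem_removableRows : r ∈ removableRows n p ↔ r < n ∧ p (r + 1) < p r := by
  simp [removableRows]

lemma pos_of_mem_removableRows (hr : r ∈ removableRows n p) : 0 < p r :=
  (Nat.zero_le _).trans_lt (mem_removableRows.1 hr).2

namespace IsPartitionOf

lemma apply_le (hp : IsPartitionOf n p) (i : ℕ) : p i ≤ n :=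
  calc p i ≤ p 0 := hp.1 (Nat.zero_le i)
    _ ≤ n := by
      rcases Nat.eq_zero_or_pos n with rfl | hn
      · simp [hp.2.1 0 le_rfl]
      · exact hp.2.2 ▸ single_le_sum (fun j _ => Nat.zero_le (p j)) (mem_range.2 hn)

lemma lt_of_pos (hp : IsPartitionOf n p) (h : 0 < p i) : i < n := by
  by_contra! hi
  exact h.ne' (hp.2.1 i hi)

lemma mem_addableRows_iff (hp : IsPartitionOf n p) :
    b ∈ addableRows n p ↔ b = 0 ∨ p b < p (b - 1) := by
  rw [mem_addableRows, and_iff_right_iff_imp]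
  rintro (rfl | h)
  · omega
  · have := hp.lt_of_pos (i := b - 1) (by omega)
    omega

lemma mem_removableRows_iff (hp : IsPartitionOf n p) :
    r ∈ removableRows n p ↔ p (r + 1) < p r := by
  rw [mem_removableRows, and_iff_right_iff_imp]
  exact fun h => hp.lt_of_pos (by omega)

end IsPartitionOf

lemma isPartitionOf_of_sum_range_succ (hp : Antitone p)
    (hsum : ∑ i ∈ range (n + 1), p i = n) : IsPartitionOf n p := by
  have hn : p n = 0 := by
    by_contra! h
    have : (n + 1) * p n ≤ n := by
      simpa [hsum] using card_nsmul_le_sum _ p (p n) fun i hi => hp (mem_range_succ_iff.1 hi)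
    nlinarith [Nat.one_le_iff_ne_zero.2 h]
  refine ⟨hp, fun i hi => Nat.eq_zero_of_le_zero (hn ▸ hp hi), ?_⟩
  rwa [sum_range_succ, hn, add_zero] at hsum

lemma isPartitionOf_addBox (hp : IsPartitionOf n p) (hb : b ∈ addableRows n p) :
    IsPartitionOf (n + 1) (addBox p b) := by
  obtain ⟨hbn, hb⟩ := mem_addableRows.1 hb
  refine ⟨antitone_nat_of_succ_le fun i => ?_, fun i hi => ?_, ?_⟩
  · have := hp.1 (Nat.le_add_right i 1)
    rcases eq_or_ne (i + 1) b with rfl | h1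
    · rw [addBox_self, addBox_of_ne (by omega)]
      simp only [add_tsub_cancel_right] at hb
      omega
    rcases eq_or_ne i b with rfl | h2
    · rw [addBox_self, addBox_of_ne h1]
      omega
    rw [addBox_of_ne h1, addBox_of_ne h2]
    exact this
  · rw [addBox_of_ne (by omega)]
    exact hp.2.1 i (by omega)
  · rw [sum_addBox (mem_range.2 hbn), sum_range_succ, hp.2.2, hp.2.1 n le_rfl]

lemma isPartitionOf_removeBox (hp : IsPartitionOf (n + 1) p) (hr : r ∈ removableRows (n + 1) p) :
    IsPartitionOf n (removeBox p r) := by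
  obtain ⟨hrn, hr⟩ := mem_removableRows.1 hr
  refine isPartitionOf_of_sum_range_succ (antitone_nat_of_succ_le fun i => ?_) ?_
  · have := hp.1 (Nat.le_add_right i 1)
    rcases eq_or_ne i r with rfl | h1
    · rw [removeBox_self, removeBox_of_ne (by omega)]
      omega
    rcases eq_or_ne (i + 1) r with rfl | h2
    · rw [removeBox_self, removeBox_of_ne h1]
      omega
    rw [removeBox_of_ne h1, removeBox_of_ne h2]
    exact this
  · have := sum_addBox (p := removeBox p r) (mem_range.2 hrn)
    rw [addBox_removeBox (by omega), hp.2.2] at this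
    omega

end YoungLattice

section Exchange

variable {n r b : ℕ} {p : ℕ → ℕ}

lemma addableRows_eq_insert_image (hp : IsPartitionOf n p) :
    addableRows n p = insert 0 ((removableRows n p).image (· + 1)) := by
  ext i
  simp only [hp.mem_addableRows_iff, mem_insert, mem_image, hp.mem_removableRows_iff]
  refine or_congr_right ⟨fun h => ⟨i - 1, ?_, ?_⟩, ?_⟩
  · rcases i with _ | i <;> simp_all
  · rcases i with _ | i <;> simp_all
  · rintro ⟨j, hj, rfl⟩
    simpa using hj

lemma self_mem_removableRows_addBox (hp : IsPartitionOf n p) (hb : b ∈ addableRows n p) :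
    b ∈ removableRows (n + 1) (addBox p b) := by
  rw [(isPartitionOf_addBox hp hb).mem_removableRows_iff, addBox_self, addBox_of_ne (by omega)]
  exact Nat.lt_succ_of_le (hp.1 (Nat.le_add_right b 1))

lemma self_mem_addableRows_removeBox (hp : IsPartitionOf (n + 1) p)
    (hr : r ∈ removableRows (n + 1) p) : r ∈ addableRows n (removeBox p r) := by
  rw [(isPartitionOf_removeBox hp hr).mem_addableRows_iff]
  rw [hp.mem_removableRows_iff] at hr
  rcases r with _ | r
  · exact Or.inl rfl
  · have := hp.1 (Nat.le_add_right r 1)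
    rw [removeBox_self, Nat.add_sub_cancel, removeBox_of_ne (by omega)]
    omega

lemma addBox_removeBox_conditions_comm (hbr : b ≠ r) :
    (b = 0 ∨ p b < p (b - 1)) ∧ addBox p b (r + 1) < addBox p b r ↔
      p (r + 1) < p r ∧ (b = 0 ∨ removeBox p r b < removeBox p r (b - 1)) := by
  rw [addBox_of_ne hbr.symm, removeBox_of_ne hbr]
  rcases eq_or_ne b (r + 1) with rfl | h
  · rw [addBox_self, Nat.add_sub_cancel, removeBox_self]
    omega
  rw [addBox_of_ne h.symm]
  rcases Nat.eq_zero_or_pos b with rfl | hb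
  · simp
  · rw [removeBox_of_ne (by omega)]
    tauto

lemma mem_addableRows_and_mem_erase_removableRows_addBox_comm (hp : IsPartitionOf (n + 1) p) :
    b ∈ addableRows (n + 1) p ∧ r ∈ (removableRows (n + 2) (addBox p b)).erase b ↔
      b ∈ (addableRows n (removeBox p r)).erase r ∧ r ∈ removableRows (n + 1) p := by
  simp only [mem_erase]
  rcases eq_or_ne b r with rfl | hbr
  · simp
  simp only [hbr, hbr.symm, ne_eq, not_false_eq_true, true_and]
  constructor
  · rintro ⟨hb, hr⟩
    rw [(isPartitionOf_addBox hp hb).mem_removableRows_iff] at hr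
    rw [hp.mem_addableRows_iff] at hb
    obtain ⟨hr, hb⟩ := (addBox_removeBox_conditions_comm hbr).1 ⟨hb, hr⟩
    rw [← hp.mem_removableRows_iff] at hr
    exact ⟨(isPartitionOf_removeBox hp hr).mem_addableRows_iff.2 hb, hr⟩
  · rintro ⟨hb, hr⟩
    rw [(isPartitionOf_removeBox hp hr).mem_addableRows_iff] at hb
    rw [hp.mem_removableRows_iff] at hr
    obtain ⟨hb, hr⟩ := (addBox_removeBox_conditions_comm hbr).2 ⟨hr, hb⟩
    rw [← hp.mem_addableRows_iff] at hb
    exact ⟨hb, (isPartitionOf_addBox hp hb).mem_removableRows_iff.2 hr⟩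

end Exchange

section Tableaux

variable {n r i j b : ℕ} {p P : ℕ → ℕ} {T : ℕ × ℕ → ℕ}

lemma mem_cells {c : ℕ × ℕ} : c ∈ cells n p ↔ c.1 < n ∧ c.2 < n ∧ c.2 < p c.1 := by
  simp [cells, and_assoc]

lemma IsPartitionOf.mem_cells_iff (hp : IsPartitionOf n p) {c : ℕ × ℕ} :
    c ∈ cells n p ↔ c.2 < p c.1 := by
  rw [mem_cells]
  refine ⟨fun h => h.2.2, fun h => ⟨hp.lt_of_pos (by omega), ?_, h⟩⟩
  have := hp.apply_le c.1
  omega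

lemma IsSYT.apply_le (hT : IsSYT n p T) (c : ℕ × ℕ) : T c ≤ n := by
  by_cases h : c ∈ cells n p
  · exact (hT.2.1.mapsTo h).2
  · simp [hT.1 c h]

lemma finite_setOf_isSYT (n : ℕ) (p : ℕ → ℕ) : {T | IsSYT n p T}.Finite := by
  refine Set.Finite.of_finite_image
    (f := fun T (c : cells n p) => (⟨min (T c) n, by omega⟩ : Fin (n + 1)))
    (Set.toFinite _) fun T₁ h₁ T₂ h₂ he => funext fun c => ?_
  by_cases hc : c ∈ cells n p
  · have := Fin.mk.inj_iff.1 (congrFun he ⟨c, hc⟩)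
    rwa [min_eq_left (h₁.apply_le c), min_eq_left (h₂.apply_le c)] at this
  · rw [h₁.1 c hc, h₂.1 c hc]

lemma dimSYT_zero (p : ℕ → ℕ) : dimSYT 0 p = 1 := by
  have : {T | IsSYT 0 p T} = {0} := by
    ext T
    simp [IsSYT, cells, funext_iff]
  rw [dimSYT, this, Set.ncard_singleton]

lemma corner_mem_cells (hP : IsPartitionOf (n + 1) P) (hr : r ∈ removableRows (n + 1) P) :
    (r, P r - 1) ∈ cells (n + 1) P := by
  rw [hP.mem_removableRows_iff] at hr
  rw [hP.mem_cells_iff]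
  exact Nat.sub_lt (by omega) one_pos

lemma cells_removeBox (hP : IsPartitionOf (n + 1) P) (hr : r ∈ removableRows (n + 1) P) :
    cells n (removeBox P r) = (cells (n + 1) P).erase (r, P r - 1) := by
  have hQ := isPartitionOf_removeBox hP hr
  ext ⟨i, j⟩
  have hQi := hQ.apply_le i
  simp only [mem_erase, mem_cells, ne_eq, Prod.mk.injEq]
  have hQpos : 0 < removeBox P r i → i < n := hQ.lt_of_pos
  rcases eq_or_ne i r with rfl | hir
  · simp only [removeBox_self, true_and] at hQi hQpos ⊢
    omega
  · simp only [removeBox_of_ne hir, hir, false_and, not_false_eq_true, true_and] at hQi hQpos ⊢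
    omega

lemma ne_corner_of_right_mem {m : ℕ} (h : (i, j + 1) ∈ cells m P) : (i, j) ≠ (r, P r - 1) := by
  rintro ⟨⟩
  have := (mem_cells.1 h).2.2
  simp only at this
  omega

lemma ne_corner_of_below_mem {m : ℕ} (hr : r ∈ removableRows m P) (h : (i + 1, j) ∈ cells m P) :
    (i, j) ≠ (r, P r - 1) := by
  rintro ⟨⟩
  have := (mem_cells.1 h).2.2
  have := (mem_removableRows.1 hr).2
  simp only at *
  omega

lemma cells_addBox (hp : IsPartitionOf n p) (hb : b ∈ addableRows n p) :
    cells (n + 1) (addBox p b) = insert (b, p b) (cells n p) := by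
  ext ⟨i, j⟩
  rw [(isPartitionOf_addBox hp hb).mem_cells_iff, mem_insert, hp.mem_cells_iff, Prod.mk.injEq]
  rcases eq_or_ne i b with rfl | hib
  · simp only [addBox_self, true_and]
    omega
  · simp [addBox_of_ne hib, hib]

end Tableaux

section Branching

variable {n r b : ℕ} {p P : ℕ → ℕ} {T : ℕ × ℕ → ℕ}

lemma bijOn_update_corner_iff (hP : IsPartitionOf (n + 1) P) (hr : r ∈ removableRows (n + 1) P)
    (hT : T (r, P r - 1) = n + 1) :
    Set.BijOn (update T (r, P r - 1) 0) (cells n (removeBox P r)) (Set.Icc 1 n) ↔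
      Set.BijOn T (cells (n + 1) P) (Set.Icc 1 (n + 1)) := by
  have hS : (cells (n + 1) P : Set (ℕ × ℕ)) = insert (r, P r - 1) (cells n (removeBox P r)) := by
    simp [cells_removeBox hP hr, corner_mem_cells hP hr]
  have hIcc : Set.Icc 1 (n + 1) = insert (T (r, P r - 1)) (Set.Icc 1 n) := by
    ext; simp [hT]; omega
  rw [hS, coe_insert, hIcc, Set.BijOn.insert_iff (by simp [cells_removeBox hP hr]) (by simp [hT])]
  refine Set.EqOn.bijOn_iff fun x hx => update_of_ne ?_ ..
  rintro rfl
  simp [cells_removeBox hP hr] at hx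

lemma lt_of_update_zero_lt {α : Type*} [DecidableEq α] {T : α → ℕ} {c x y : α}
    (hT : T c = n + 1) (hx : x ≠ c) (hle : update T c 0 x ≤ n)
    (h : y ≠ c → update T c 0 x < update T c 0 y) : T x < T y := by
  rw [update_of_ne hx] at hle h
  by_cases hy : y = c
  · rw [hy, hT]
    omega
  · simpa [update_of_ne hy] using h hy

lemma isSYT_update_corner_iff (hP : IsPartitionOf (n + 1) P) (hr : r ∈ removableRows (n + 1) P)
    (hT : T (r, P r - 1) = n + 1) :
    IsSYT n (removeBox P r) (update T (r, P r - 1) 0) ↔ IsSYT (n + 1) P T := by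
  have hc := corner_mem_cells hP hr
  have hcells := cells_removeBox hP hr
  constructor
  · intro hT'
    have hle := hT'.apply_le
    obtain ⟨h0, hbij, hrow, hcol⟩ := hT'
    refine ⟨fun x hx => ?_, (bijOn_update_corner_iff hP hr hT).1 hbij,
      fun i j hij => ?_, fun i j hij => ?_⟩
    · have hxc : x ≠ (r, P r - 1) := fun e => hx (e ▸ hc)
      simpa [update_of_ne hxc] using h0 x (hcells ▸ fun h => hx (mem_of_mem_erase h))
    · exact lt_of_update_zero_lt hT (ne_corner_of_right_mem hij) (hle _)
        fun hy => hrow i j (hcells ▸ mem_erase.2 ⟨hy, hij⟩)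
    · exact lt_of_update_zero_lt hT (ne_corner_of_below_mem hr hij) (hle _)
        fun hy => hcol i j (hcells ▸ mem_erase.2 ⟨hy, hij⟩)
  · rintro ⟨h0, hbij, hrow, hcol⟩
    refine ⟨fun x hx => ?_, (bijOn_update_corner_iff hP hr hT).2 hbij,
      fun i j hij => ?_, fun i j hij => ?_⟩
    · rw [hcells] at hx
      by_cases hxc : x = (r, P r - 1)
      · simp [hxc]
      · rw [update_of_ne hxc]
        exact h0 x fun h => hx (mem_erase.2 ⟨hxc, h⟩)
    · obtain ⟨hy, hij⟩ := mem_erase.1 (hcells ▸ hij)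
      rw [update_of_ne (ne_corner_of_right_mem hij), update_of_ne hy]
      exact hrow i j hij
    · obtain ⟨hy, hij⟩ := mem_erase.1 (hcells ▸ hij)
      rw [update_of_ne (ne_corner_of_below_mem hr hij), update_of_ne hy]
      exact hcol i j hij

lemma IsSYT.exists_corner_eq (hP : IsPartitionOf (n + 1) P) (hT : IsSYT (n + 1) P T) :
    ∃ r ∈ removableRows (n + 1) P, T (r, P r - 1) = n + 1 := by
  obtain ⟨⟨i, j⟩, hc, hTc⟩ := hT.2.1.surjOn (show n + 1 ∈ Set.Icc 1 (n + 1) by simp)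
  have hmax : ∀ y ∈ cells (n + 1) P, ¬ T (i, j) < T y := fun y hy => by
    rw [hTc, not_lt]
    exact (hT.2.1.mapsTo hy).2
  have hright : (i, j + 1) ∉ cells (n + 1) P := fun h => hmax _ h (hT.2.2.1 i j h)
  have hbelow : (i + 1, j) ∉ cells (n + 1) P := fun h => hmax _ h (hT.2.2.2 i j h)
  rw [mem_coe, hP.mem_cells_iff] at hc
  rw [hP.mem_cells_iff] at hright hbelow
  simp only [not_lt] at hc hright hbelow
  refine ⟨i, hP.mem_removableRows_iff.2 (by omega), ?_⟩
  rwa [show P i - 1 = j by omega]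

lemma ncard_isSYT_corner_eq (hP : IsPartitionOf (n + 1) P) (hr : r ∈ removableRows (n + 1) P) :
    {T | IsSYT (n + 1) P T ∧ T (r, P r - 1) = n + 1}.ncard = dimSYT n (removeBox P r) := by
  refine Set.ncard_congr (fun T _ => update T (r, P r - 1) 0)
    (fun T ⟨hT, hTc⟩ => (isSYT_update_corner_iff hP hr hTc).2 hT)
    (fun T₁ T₂ ⟨_, hT₁⟩ ⟨_, hT₂⟩ h => ?_) fun T' hT' => ?_
  · rw [← update_eq_self (r, P r - 1) T₁, ← update_idem (a := (r, P r - 1)) (v := 0), h,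
      update_idem, hT₁, ← hT₂, update_eq_self]
  · have hT'c : T' (r, P r - 1) = 0 := hT'.1 _ (by simp [cells_removeBox hP hr])
    have hupd : update (update T' (r, P r - 1) (n + 1)) (r, P r - 1) 0 = T' := by
      rw [update_idem, ← hT'c, update_eq_self]
    refine ⟨update T' (r, P r - 1) (n + 1), ⟨?_, update_self ..⟩, hupd⟩
    exact (isSYT_update_corner_iff hP hr (update_self ..)).1 (by rwa [hupd])

lemma dimSYT_succ (hP : IsPartitionOf (n + 1) P) :
    dimSYT (n + 1) P = ∑ r ∈ removableRows (n + 1) P, dimSYT n (removeBox P r) := by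
  have hcover : {T | IsSYT (n + 1) P T} =
      ⋃ r ∈ (removableRows (n + 1) P : Set ℕ),
        {T | IsSYT (n + 1) P T ∧ T (r, P r - 1) = n + 1} := by
    ext T
    simp only [Set.mem_ofPred_eq, Set.mem_iUnion, mem_coe, exists_prop]
    refine ⟨fun hT => ?_, fun ⟨_, _, hT, _⟩ => hT⟩
    obtain ⟨r, hr, hTr⟩ := hT.exists_corner_eq hP
    exact ⟨r, hr, hT, hTr⟩
  have hdisj : (removableRows (n + 1) P : Set ℕ).PairwiseDisjoint
      fun r => {T | IsSYT (n + 1) P T ∧ T (r, P r - 1) = n + 1} := by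
    refine fun r hr s hs hrs => Set.disjoint_left.2 fun T ⟨hT, hTr⟩ ⟨_, hTs⟩ => hrs ?_
    exact congrArg Prod.fst
      (hT.2.1.injOn (corner_mem_cells hP hr) (corner_mem_cells hP hs) (hTr.trans hTs.symm))
  rw [dimSYT, hcover, (finite_toSet _).ncard_biUnion
    (fun r _ => (finite_setOf_isSYT _ _).subset fun T hT => hT.1) hdisj, finsum_mem_coe_finset]
  exact sum_congr rfl fun r hr => ncard_isSYT_corner_eq hP hr

lemma dimSYT_addBox (hp : IsPartitionOf n p) (hb : b ∈ addableRows n p) :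
    dimSYT (n + 1) (addBox p b) = dimSYT n p +
      ∑ r ∈ (removableRows (n + 1) (addBox p b)).erase b, dimSYT n (addBox (removeBox p r) b) := by
  rw [dimSYT_succ (isPartitionOf_addBox hp hb),
    ← add_sum_erase _ _ (self_mem_removableRows_addBox hp hb), removeBox_addBox]
  exact congrArg _ <| sum_congr rfl fun r hr => by
    rw [removeBox_addBox_comm (ne_of_mem_erase hr).symm]

lemma sum_addableRows_mul_dimSYT_addBox {R : Type*} [Semiring R] (hp : IsPartitionOf (n + 1) p)
    (g : ℕ → R) :
    ∑ b ∈ addableRows (n + 1) p, g b * dimSYT (n + 2) (addBox p b) =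
      (∑ b ∈ addableRows (n + 1) p, g b) * dimSYT (n + 1) p +
        ∑ r ∈ removableRows (n + 1) p, ∑ b ∈ (addableRows n (removeBox p r)).erase r,
          g b * dimSYT (n + 1) (addBox (removeBox p r) b) := by
  rw [← sum_comm' fun b r => mem_addableRows_and_mem_erase_removableRows_addBox_comm hp, sum_mul,
    ← sum_add_distrib]
  refine sum_congr rfl fun b hb => ?_
  rw [dimSYT_addBox hp hb]
  push_cast
  rw [mul_add, mul_sum]

end Branching

section Partitions

variable {n : ℕ} {p : ℕ → ℕ}

lemma finite_setOf_isPartitionOf (n : ℕ) : {p | IsPartitionOf n p}.Finite := by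
  refine Set.Finite.of_finite_image
    (f := fun p (i : Fin n) => (⟨min (p i) n, by omega⟩ : Fin (n + 1)))
    (Set.toFinite _) fun p₁ h₁ p₂ h₂ he => funext fun i => ?_
  by_cases hi : i < n
  · have := Fin.mk.inj_iff.1 (congrFun he ⟨i, hi⟩)
    rwa [min_eq_left (h₁.apply_le i), min_eq_left (h₂.apply_le i)] at this
  · rw [h₁.2.1 i (not_lt.1 hi), h₂.2.1 i (not_lt.1 hi)]

noncomputable def partitions (n : ℕ) : Finset (ℕ → ℕ) :=
  (finite_setOf_isPartitionOf n).toFinset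

@[simp] lemma mem_partitions : p ∈ partitions n ↔ IsPartitionOf n p :=
  Set.Finite.mem_toFinset _

lemma coe_partitions : (partitions n : Set (ℕ → ℕ)) = {p | IsPartitionOf n p} :=
  Set.Finite.coe_toFinset _

lemma partitions_zero : partitions 0 = {0} := by
  ext p
  simp only [mem_partitions, mem_singleton]
  exact ⟨fun hp => funext fun i => hp.2.1 i (Nat.zero_le i),
    fun h => h ▸ ⟨antitone_const, fun _ _ => rfl, rfl⟩⟩

lemma sum_partitions_succ_removableRows {M : Type*} [AddCommMonoid M] (f : (ℕ → ℕ) → ℕ → M) :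
    ∑ P ∈ partitions (n + 1), ∑ r ∈ removableRows (n + 1) P, f P r =
      ∑ p ∈ partitions n, ∑ b ∈ addableRows n p, f (addBox p b) b := by
  rw [sum_sigma', sum_sigma']
  refine sum_nbij' (fun x => ⟨removeBox x.1 x.2, x.2⟩) (fun y => ⟨addBox y.1 y.2, y.2⟩)
    ?_ ?_ ?_ (fun y _ => by simp) ?_
  all_goals simp only [mem_sigma, mem_partitions]
  · exact fun x h => ⟨isPartitionOf_removeBox h.1 h.2, self_mem_addableRows_removeBox h.1 h.2⟩
  · exact fun y h => ⟨isPartitionOf_addBox h.1 h.2, self_mem_removableRows_addBox h.1 h.2⟩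
  · exact fun x h => by rw [addBox_removeBox (pos_of_mem_removableRows h.2)]
  · exact fun x h => by rw [addBox_removeBox (pos_of_mem_removableRows h.2)]

end Partitions

section ZMeasure

variable {R : Type*} [CommRing R] (z z' : R) {n : ℕ} {p : ℕ → ℕ}

/-- The factor `(c(□) + z)(c(□) + z')` of the box `□ = (i, j)`, whose content is `c(□) = j - i`. -/
def boxWeight (c : ℕ × ℕ) : R := ((c.2 : R) - c.1 + z) * ((c.2 : R) - c.1 + z')

lemma sum_range_two_mul_add_one (n : ℕ) : ∑ i ∈ range n, (2 * (i : R) + 1) = n ^ 2 := by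
  induction n with
  | zero => simp
  | succ k ih =>
    rw [sum_range_succ, ih]
    push_cast
    ring

lemma sum_addableRows_boxWeight (hp : IsPartitionOf n p) :
    ∑ b ∈ addableRows n p, boxWeight z z' (b, p b) =
      ∑ r ∈ removableRows n p, boxWeight z z' (r, p r - 1) + (2 * n + z * z') := by
  set φ : R → R := fun x => (x + z) * (x + z')
  set F : ℕ → R := fun i => φ ((p i : R) - i)
  have hrem : ∀ r ∈ removableRows n p, boxWeight z z' (r, p r - 1) = φ ((p r : R) - r - 1) :=
    fun r hr => by
      simp only [boxWeight, φ, Nat.cast_sub (pos_of_mem_removableRows hr), Nat.cast_one]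
      ring
  have hflat : ∀ r ∈ range n, r ∉ removableRows n p → F (r + 1) - φ ((p r : R) - r - 1) = 0 :=
    fun r hr hnr => by
      have : p (r + 1) = p r := by
        rw [hp.mem_removableRows_iff, not_lt] at hnr
        exact le_antisymm (hp.1 (Nat.le_add_right r 1)) hnr
      simp only [F, φ, this]
      push_cast
      ring
  have hstep : ∀ r, F r - φ ((p r : R) - r - 1) = 2 * (p r : R) - (2 * r + 1) + (z + z') :=
    fun r => by simp only [F, φ]; ring
  have hsize : ∑ i ∈ range n, (p i : R) = n := by rw [← Nat.cast_sum, hp.2.2]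
  calc ∑ b ∈ addableRows n p, boxWeight z z' (b, p b)
      = F 0 + ∑ r ∈ removableRows n p, F (r + 1) := by
        rw [addableRows_eq_insert_image hp, sum_insert (by simp), sum_image (by simp)]
        rfl
    _ = F 0 + ∑ r ∈ removableRows n p, φ ((p r : R) - r - 1) +
          ∑ r ∈ range n, ((F (r + 1) - F r) + (F r - φ ((p r : R) - r - 1))) := by
        simp only [sub_add_sub_cancel]
        rw [← sum_subset (show removableRows n p ⊆ range n from filter_subset _ _) hflat,
          sum_sub_distrib]
        ring
    _ = ∑ r ∈ removableRows n p, boxWeight z z' (r, p r - 1) + (2 * n + z * z') := by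
        rw [sum_congr rfl hrem, sum_add_distrib, sum_range_sub, sum_congr rfl fun r _ => hstep r,
          sum_add_distrib, sum_sub_distrib, ← mul_sum, hsize, sum_range_two_mul_add_one, sum_const,
          card_range, nsmul_eq_mul]
        simp only [F, φ, hp.2.1 n le_rfl, Nat.cast_zero]
        ring

/-- Kerov's identity for the up-transition weights of the z-measures. -/
theorem sum_addableRows_boxWeight_mul_dimSYT (hp : IsPartitionOf n p) :
    ∑ b ∈ addableRows n p, boxWeight z z' (b, p b) * dimSYT (n + 1) (addBox p b) =
      (n + 1) * (z * z' + n) * dimSYT n p := by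
  induction n generalizing p with
  | zero =>
    have hA : addableRows 0 p = {0} := by
      ext b
      simp only [hp.mem_addableRows_iff, hp.2.1 _ (Nat.zero_le _), lt_self_iff_false, or_false,
        mem_singleton]
    have hR : (removableRows 1 (addBox p 0)).erase 0 = ∅ := by
      ext r
      simp only [mem_erase, mem_removableRows, notMem_empty, iff_false]
      omega
    rw [hA, sum_singleton, dimSYT_addBox hp (hA ▸ mem_singleton_self 0), hR, sum_empty,
      dimSYT_zero, hp.2.1 0 le_rfl]
    simp [boxWeight]
  | succ k ih =>
    have hIH : ∀ r ∈ removableRows (k + 1) p,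
        ∑ b ∈ (addableRows k (removeBox p r)).erase r,
            boxWeight z z' (b, p b) * dimSYT (k + 1) (addBox (removeBox p r) b) =
          (k + 1) * (z * z' + k) * dimSYT k (removeBox p r) -
            boxWeight z z' (r, p r - 1) * dimSYT (k + 1) p := fun r hr => by
      rw [← ih (isPartitionOf_removeBox hp hr),
        ← add_sum_erase _ _ (self_mem_addableRows_removeBox hp hr),
        addBox_removeBox (pos_of_mem_removableRows hr), removeBox_self, add_sub_cancel_left]
      exact sum_congr rfl fun b hb => by rw [removeBox_of_ne (ne_of_mem_erase hb)]
    rw [sum_addableRows_mul_dimSYT_addBox hp, sum_congr rfl hIH, sum_sub_distrib, ← mul_sum,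
      ← sum_mul, ← Nat.cast_sum, ← dimSYT_succ hp, sum_addableRows_boxWeight z z' hp]
    push_cast
    ring

theorem sum_partitions_prod_boxWeight_mul_dimSYT_sq (n : ℕ) :
    ∑ p ∈ partitions n, (∏ c ∈ cells n p, boxWeight z z' c) * (dimSYT n p : R) ^ 2 =
      (ascPochhammer R n).eval (z * z') * n.factorial := by
  induction n with
  | zero => simp [partitions_zero, cells, dimSYT_zero]
  | succ n ih =>
    calc ∑ P ∈ partitions (n + 1),
          (∏ c ∈ cells (n + 1) P, boxWeight z z' c) * (dimSYT (n + 1) P : R) ^ 2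
        = ∑ P ∈ partitions (n + 1), ∑ r ∈ removableRows (n + 1) P,
            (∏ c ∈ cells (n + 1) P, boxWeight z z' c) * dimSYT (n + 1) P *
              dimSYT n (removeBox P r) := by
          refine sum_congr rfl fun P hP => ?_
          rw [← mul_sum, ← Nat.cast_sum, ← dimSYT_succ (mem_partitions.1 hP)]
          ring
      _ = ∑ p ∈ partitions n, ∑ b ∈ addableRows n p,
            (∏ c ∈ cells (n + 1) (addBox p b), boxWeight z z' c) * dimSYT (n + 1) (addBox p b) *
              dimSYT n p := by
          simp only [sum_partitions_succ_removableRows, removeBox_addBox]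
      _ = ∑ p ∈ partitions n, (n + 1) * (z * z' + n) *
            ((∏ c ∈ cells n p, boxWeight z z' c) * (dimSYT n p : R) ^ 2) := by
          refine sum_congr rfl fun p hp => ?_
          rw [mem_partitions] at hp
          calc _ = (∏ c ∈ cells n p, boxWeight z z' c) * dimSYT n p * ∑ b ∈ addableRows n p,
                boxWeight z z' (b, p b) * dimSYT (n + 1) (addBox p b) := by
                rw [mul_sum]
                refine sum_congr rfl fun b hb => ?_
                rw [cells_addBox hp hb, prod_insert (by simp [hp.mem_cells_iff])]
                ring
            _ = _ := by
                rw [sum_addableRows_boxWeight_mul_dimSYT z z' hp]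
                ring
      _ = (ascPochhammer R (n + 1)).eval (z * z') * (n + 1).factorial := by
          rw [← mul_sum, ih, ascPochhammer_succ_eval, Nat.factorial_succ]
          push_cast
          ring

end ZMeasure

lemma ascPochhammer_eval_mul_conj_ne_zero {z : ℂ} (hz : z ≠ 0) (n : ℕ) :
    (ascPochhammer ℂ n).eval (z * starRingEnd ℂ z) ≠ 0 := by
  rw [Complex.mul_conj, ← Complex.coe_algebraMap, ← ascPochhammer_map (algebraMap ℝ ℂ),
    Polynomial.eval_map_algebraMap, Polynomial.aeval_algebraMap_apply_eq_algebraMap_eval,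
    Complex.coe_algebraMap, Complex.ofReal_ne_zero]
  exact (ascPochhammer_pos n _ (Complex.normSq_pos.2 hz)).ne'

/-- The `n`-th level z-measure is a probability distribution on partitions of `n`:
`∑_{λ ⊢ n} (∏_{b∈λ} (c(b)+z)(c(b)+z̄)) / (zz̄)_n · (dim λ)² / n! = 1`
for `z` a non-integral complex number and `z' = conj z`. -/
theorem zMeasure_sums_to_one (z : ℂ) (hz : ∀ m : ℤ, z ≠ m) (n : ℕ) :
    ∑ᶠ p ∈ {q : ℕ → ℕ | IsPartitionOf n q},
      (∏ b ∈ cells n p, (((b.2 : ℂ) - b.1 + z) * ((b.2 : ℂ) - b.1 + starRingEnd ℂ z))) /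
          (ascPochhammer ℂ n).eval (z * starRingEnd ℂ z) *
        ((dimSYT n p : ℂ) ^ 2 / (n.factorial : ℂ)) = 1 := by
  have hz0 : z ≠ 0 := by exact_mod_cast hz 0
  rw [← coe_partitions, finsum_mem_coe_finset]
  calc _ = (∑ p ∈ partitions n,
          (∏ c ∈ cells n p, boxWeight z (starRingEnd ℂ z) c) * (dimSYT n p : ℂ) ^ 2) /
        ((ascPochhammer ℂ n).eval (z * starRingEnd ℂ z) * n.factorial) := by
        rw [sum_div]
        exact sum_congr rfl fun p _ => div_mul_div_comm _ _ _ _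
    _ = 1 := by
        rw [sum_partitions_prod_boxWeight_mul_dimSYT_sq, div_self]
        exact mul_ne_zero (ascPochhammer_eval_mul_conj_ne_zero hz0 n)
          (Nat.cast_ne_zero.2 n.factorial_ne_zero)
end

section
/- Under the RSK correspondence for permutations, the length of the longest increasing subsequence of a permutation σ ∈ S_n equals λ_1, the length of the first row of the common shape λ of the pair of standard Young tableaux associated to σ. -/
/-- Schensted row insertion of `x` into a tableau given as a list of rows:
`x` replaces the first strictly larger entry of the first row, which is then
inserted into the remaining rows; if no entry is larger, `x` is appended. -/
def rowInsert : List (List ℕ) → ℕ → List (List ℕ)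
  | [], x => [[x]]
  | r :: rest, x =>
    match r.findIdx? (fun a => decide (x < a)) with
    | none => (r ++ [x]) :: rest
    | some i => r.set i x :: rowInsert rest (r.getD i 0)

/-- The insertion tableau of a word: successive Schensted row insertions, starting
from the empty tableau. -/
def insertionTableau (w : List ℕ) : List (List ℕ) :=
  w.foldl rowInsert []

/-!
Entries bumped out of the first row never come back to it, so the first row of the insertion
tableau of `w` is obtained by inserting the letters of `w` into a single row (patience sorting).
By induction on `w`, its entry in position `j` is the least possible last letter of a weakly
increasing subsequence of `w` of length `j + 1`: such a subsequence ending in `v` forces entries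
`≤ v` in positions `0, …, j`, and conversely each entry ends such a subsequence, obtained by
extending the one ending at its left neighbour at the moment it was inserted. Hence the length of
the first row is the length of a longest weakly increasing subsequence; for a permutation, weakly
and strictly increasing subsequences coincide.
-/

open List

theorem List.sublist_append_singleton_iff {α : Type*} {l l' : List α} {a : α} :
    l <+ l' ++ [a] ↔ l <+ l' ∨ ∃ r, l = r ++ [a] ∧ r <+ l' := by
  rw [← reverse_sublist, reverse_append, reverse_singleton, singleton_append, sublist_cons_iff]
  constructor
  · rintro (h | ⟨r, hr, h⟩)
    · exact .inl (reverse_sublist.1 h)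
    · refine .inr ⟨r.reverse, ?_, by simpa using h.reverse⟩
      simpa using congrArg reverse hr
  · rintro (h | ⟨r, rfl, h⟩)
    · exact .inl (reverse_sublist.2 h)
    · exact .inr ⟨r.reverse, by simp, reverse_sublist.2 h⟩

namespace Schensted

variable {α : Type*} [LinearOrder α]

def insertRow (r : List α) (x : α) : List α :=
  match r.findIdx? (fun a => decide (x < a)) with
  | none => r ++ [x]
  | some i => r.set i x

def firstRow (w : List α) : List α :=
  w.foldl insertRow []

theorem firstRow_append_singleton (w : List α) (x : α) :
    firstRow (w ++ [x]) = insertRow (firstRow w) x := by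
  simp [firstRow]

theorem exists_getElem?_insertRow (r : List α) (x : α) :
    ∃ p : ℕ, (∀ j < p, ∃ a ∈ r[j]?, a ≤ x) ∧ (∀ a ∈ r[p]?, x < a) ∧
      ∀ j, (insertRow r x)[j]? = if j = p then some x else r[j]? := by
  unfold insertRow
  cases h : r.findIdx? (fun a => decide (x < a)) with
  | none =>
    rw [findIdx?_eq_none_iff] at h
    refine ⟨r.length, fun j hj => ⟨r[j], by simp [hj], ?_⟩, by simp, fun j => ?_⟩
    · simpa using h r[j] (getElem_mem hj)
    · rw [getElem?_append]
      grind
  | some i =>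
    obtain ⟨hi, hxi, hmin⟩ := findIdx?_eq_some_iff_getElem.1 h
    refine ⟨i, fun j hj => ⟨r[j], by simp [hj.trans hi], by simpa using hmin j hj⟩,
      by simpa [hi] using hxi, fun j => ?_⟩
    rcases eq_or_ne j i with rfl | hji
    · simp [hi]
    · simp [hji, getElem?_set_ne hji.symm]

theorem exists_getElem?_insertRow_le {r : List α} {k : ℕ} {a : α} (x : α) (ha : a ∈ r[k]?) :
    ∃ b ∈ (insertRow r x)[k]?, b ≤ a := by
  obtain ⟨p, -, hp, hins⟩ := exists_getElem?_insertRow r x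
  rw [hins]
  split_ifs with hk
  · subst hk
    exact ⟨x, rfl, (hp a ha).le⟩
  · exact ⟨a, ha, le_rfl⟩

theorem exists_getElem?_insertRow_le_self {r : List α} {x : α} {k : ℕ}
    (h : ∀ j < k, ∃ a ∈ r[j]?, a ≤ x) : ∃ b ∈ (insertRow r x)[k]?, b ≤ x := by
  obtain ⟨p, hle, hlt, hins⟩ := exists_getElem?_insertRow r x
  rw [hins]
  rcases lt_trichotomy k p with hkp | rfl | hpk
  · obtain ⟨a, ha, hax⟩ := hle k hkp
    exact ⟨a, by simpa [hkp.ne] using ha, hax⟩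
  · exact ⟨x, by simp, le_rfl⟩
  · obtain ⟨a, ha, hax⟩ := h p hpk
    exact absurd (hlt a ha) hax.not_gt

/-- Bounding every position up to `l.length`, not only the last one, lets the induction go through
without knowing that the row is sorted. -/
theorem exists_getElem?_firstRow_le {w l : List α} {v : α} (hsub : l ++ [v] <+ w)
    (hl : (l ++ [v]).SortedLE) : ∀ j ≤ l.length, ∃ a ∈ (firstRow w)[j]?, a ≤ v := by
  induction w using reverseRecOn generalizing l v with
  | nil => simpa using hsub.length_le
  | append_singleton w x ih =>
    intro j hj
    rw [firstRow_append_singleton]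
    rcases sublist_append_singleton_iff.1 hsub with hsub | ⟨r, hrl, hr⟩
    · obtain ⟨a, ha, hav⟩ := ih hsub hl j hj
      obtain ⟨b, hb, hba⟩ := exists_getElem?_insertRow_le x ha
      exact ⟨b, hb, hba.trans hav⟩
    · obtain ⟨rfl, hvx⟩ := append_inj' hrl rfl
      obtain rfl : v = x := by simpa using hvx
      refine exists_getElem?_insertRow_le_self fun i hi => ?_
      obtain ⟨l₀, u, rfl⟩ := (eq_nil_or_concat' l).resolve_left fun hl => by
        simp only [hl, length_nil] at hj
        omega
      obtain ⟨hl₀, -, huv⟩ := isChain_append.1 (sortedLE_iff_isChain.1 hl)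
      have hi : i ≤ l₀.length := by
        simp only [length_append, length_singleton] at hj
        omega
      obtain ⟨a, ha, hau⟩ := ih hr (sortedLE_iff_isChain.2 hl₀) i hi
      exact ⟨a, ha, hau.trans (by simpa using huv)⟩

theorem exists_sublist_of_mem_getElem?_firstRow {w : List α} {j : ℕ} {a : α}
    (ha : a ∈ (firstRow w)[j]?) :
    ∃ l, l.length = j ∧ l ++ [a] <+ w ∧ (l ++ [a]).SortedLE := by
  induction w using reverseRecOn generalizing j a with
  | nil => simp [firstRow] at ha
  | append_singleton w x ih =>
    obtain ⟨p, hle, -, hins⟩ := exists_getElem?_insertRow (firstRow w) x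
    rw [firstRow_append_singleton, hins] at ha
    split_ifs at ha with hjp
    · obtain rfl : x = a := by simpa using ha
      subst hjp
      rcases j with _ | i
      · exact ⟨[], rfl, by simp, (pairwise_singleton _ _).sortedLE⟩
      · obtain ⟨u, hu, hua⟩ := hle i (by omega)
        obtain ⟨l, rfl, hsub, hl⟩ := ih hu
        refine ⟨l ++ [u], by simp, hsub.append (Sublist.refl _), ?_⟩
        exact sortedLE_iff_isChain.2 <|
          (sortedLE_iff_isChain.1 hl).append (isChain_singleton _) (by simpa using hua)
    · obtain ⟨l, hl, hsub, hsort⟩ := ih ha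
      exact ⟨l, hl, hsub.trans (sublist_append_left _ _), hsort⟩

theorem isGreatest_length_firstRow (w : List α) :
    IsGreatest {m | ∃ l, l <+ w ∧ l.SortedLE ∧ l.length = m} (firstRow w).length := by
  constructor
  · rcases eq_nil_or_concat' (firstRow w) with h | ⟨r, a, h⟩
    · exact ⟨[], nil_sublist _, Pairwise.nil.sortedLE, by simp [h]⟩
    · obtain ⟨l, hl, hsub, hsort⟩ :=
        exists_sublist_of_mem_getElem?_firstRow (w := w) (j := r.length) (a := a) (by simp [h])
      exact ⟨_, hsub, hsort, by simp [h, hl]⟩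
  · rintro m ⟨l, hsub, hsort, rfl⟩
    rcases eq_nil_or_concat' l with rfl | ⟨l, v, rfl⟩
    · simp
    · obtain ⟨a, ha, -⟩ := exists_getElem?_firstRow_le hsub hsort l.length le_rfl
      simpa using (List.getElem?_eq_some_iff.1 ha).1

theorem exists_finset_iff_exists_sublist_ofFn {n : ℕ} (f : Fin n → α) (m : ℕ) :
    (∃ s : Finset (Fin n), s.card = m ∧ ∀ i ∈ s, ∀ j ∈ s, i < j → f i < f j) ↔
      ∃ l, l <+ List.ofFn f ∧ l.SortedLT ∧ l.length = m := by
  rw [ofFn_eq_map]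
  constructor
  · rintro ⟨s, rfl, hs⟩
    have hsort := s.sortedLT_sort.pairwise
    have hsub : s.sort <+ finRange n := sublist_of_subperm_of_pairwise
      (subperm_of_subset (Finset.sort_nodup _ _) fun i _ => mem_finRange i) hsort
      (pairwise_lt_finRange n)
    refine ⟨s.sort.map f, hsub.map f, ?_, by simp⟩
    rw [sortedLT_iff_pairwise, pairwise_map]
    exact hsort.imp_of_mem fun hi hj hij =>
      hs _ ((Finset.mem_sort _).1 hi) _ ((Finset.mem_sort _).1 hj) hij
  · rintro ⟨l, hl, hsort, rfl⟩
    obtain ⟨l', hl', rfl⟩ := sublist_map_iff.1 hl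
    refine ⟨l'.toFinset, by simp [toFinset_card_of_nodup ((nodup_finRange n).sublist hl')], ?_⟩
    have hboth := ((pairwise_lt_finRange n).sublist hl').and
      (pairwise_map.1 (sortedLT_iff_pairwise.1 hsort))
    have hmono : ∀ ⦃i⦄, i ∈ l' → ∀ ⦃j⦄, j ∈ l' → i < j → f i < f j :=
      Pairwise.forall_of_forall_of_flip (fun _ _ h => absurd h (lt_irrefl _))
        (hboth.imp fun h _ => h.2) (hboth.imp fun h (h' : _ < _) => absurd h.1 h'.asymm)
    exact fun i hi j hj => hmono (mem_toFinset.1 hi) (mem_toFinset.1 hj)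

end Schensted

open Schensted

theorem headD_rowInsert (t : List (List ℕ)) (x : ℕ) :
    (rowInsert t x).headD [] = insertRow (t.headD []) x := by
  cases t with
  | nil => rfl
  | cons r rest =>
    cases h : r.findIdx? (fun a => decide (x < a)) <;> simp [rowInsert, insertRow, h]

theorem headD_insertionTableau (w : List ℕ) :
    (insertionTableau w).headD [] = firstRow w := by
  suffices ∀ t, (w.foldl rowInsert t).headD [] = w.foldl insertRow (t.headD []) from this []
  induction w with
  | nil => intro t; rfl
  | cons x w ih => intro t; rw [foldl_cons, foldl_cons, ih, headD_rowInsert]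

theorem rsk_first_row_eq_longest_increasing_subsequence_general
    (n : ℕ) (σ : Equiv.Perm (Fin n)) :
    ((insertionTableau (List.ofFn fun i => (σ i : ℕ))).headD []).length =
      sSup {m | ∃ s : Finset (Fin n), s.card = m ∧
        ∀ i ∈ s, ∀ j ∈ s, i < j → σ i < σ j} := by
  set w := List.ofFn fun i => (σ i : ℕ)
  have hw : w.Nodup := nodup_ofFn.2 (Fin.val_injective.comp σ.injective)
  have hlis : {m | ∃ s : Finset (Fin n), s.card = m ∧ ∀ i ∈ s, ∀ j ∈ s, i < j → σ i < σ j} =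
      {m | ∃ l, l <+ w ∧ l.SortedLE ∧ l.length = m} := by
    ext m
    refine (exists_finset_iff_exists_sublist_ofFn (fun i => (σ i : ℕ)) m).trans ?_
    exact exists_congr fun l => and_congr_right fun hl => by
      rw [sortedLT_iff_nodup_and_sortedLE, and_iff_right (hw.sublist hl)]
  rw [headD_insertionTableau, hlis, (isGreatest_length_firstRow w).csSup_eq]

/-- Schensted's theorem: under the RSK correspondence, the length of the first row of the
shape associated to a permutation `σ ∈ S_n` equals the length of the longest increasing
subsequence of `σ`. -/
theorem rsk_first_row_eq_longest_increasing_subsequence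
    (n : ℕ) (hn : 0 < n) (σ : Equiv.Perm (Fin n)) :
    ((insertionTableau (List.ofFn fun i => (σ i : ℕ))).headD []).length =
      sSup {m | ∃ s : Finset (Fin n), s.card = m ∧
        ∀ i ∈ s, ∀ j ∈ s, i < j → σ i < σ j} :=
  rsk_first_row_eq_longest_increasing_subsequence_general n σ
end
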